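/- arXiv:1012.1672 — 4 statements merged into one kernel-verified Lean document; each statement's English description precedes it below -/
import Mathlib

section
/- Let N ≥ 2 and let p_l = 1/N and p_h satisfy 1/N < p_h < 1. Then N·p_h(1−p_h)^{N−1} < N·p_l(1−p_l)^{N−1}; that is, the total throughput at the Nash equilibrium profile (p_h, …, p_h) is strictly lower than the total throughput at the symmetric social optimum (p_l, …, p_l). -/
/-! The per-user throughput `p (1 - p) ^ (N - 1)` has derivative `(1 - p) ^ (N - 2) (1 - N p)`,
negative on `(1/N, 1)`, so it strictly decreases from its maximum at `1/N` as `p` moves to `p_h`. -/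

open Set

theorem hasDerivAt_mul_one_sub_pow_succ (n : ℕ) (p : ℝ) :
    HasDerivAt (fun p : ℝ => p * (1 - p) ^ (n + 1)) ((1 - p) ^ n * (1 - (n + 2) * p)) p := by
  have hpow : HasDerivAt (fun p : ℝ => (1 - p) ^ (n + 1)) ((n + 1 : ℕ) * (1 - p) ^ n * (-1)) p := by
    simpa using ((hasDerivAt_id p).const_sub 1).fun_pow (n + 1)
  refine ((hasDerivAt_id' p).mul hpow).congr_deriv ?_
  push_cast
  ring

theorem strictAntiOn_mul_one_sub_pow_succ (n : ℕ) :
    StrictAntiOn (fun p : ℝ => p * (1 - p) ^ (n + 1)) (Icc (1 / (n + 2)) 1) := by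
  refine strictAntiOn_of_deriv_neg (convex_Icc _ _) (by fun_prop) fun p hp => ?_
  rw [interior_Icc] at hp
  obtain ⟨hp_gt, hp_lt⟩ := hp
  rw [(hasDerivAt_mul_one_sub_pow_succ n p).deriv]
  have hnp : 1 < (n + 2) * p := by
    rwa [div_lt_iff₀' (by positivity)] at hp_gt
  exact mul_neg_of_pos_of_neg (pow_pos (by linarith) n) (by linarith)

/-- For `N ≥ 2`, `pl = 1/N` and `1/N < ph < 1`, the total throughput at the Nash
equilibrium `(ph, …, ph)` is strictly lower than at the symmetric social optimum
`(pl, …, pl)`: `N·ph(1−ph)^{N−1} < N·pl(1−pl)^{N−1}`. -/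
theorem nash_throughput_lt_optimum (N : ℕ) (hN : 2 ≤ N) (pl ph : ℝ)
    (hpl : pl = 1 / N) (hlh : pl < ph) (hph : ph < 1) :
    (N : ℝ) * (ph * (1 - ph) ^ (N - 1)) < (N : ℝ) * (pl * (1 - pl) ^ (N - 1)) := by
  obtain ⟨n, rfl⟩ : ∃ n, N = n + 2 := ⟨N - 2, by omega⟩
  push_cast at hpl
  have hpl_lt_one : pl < 1 := by
    rw [hpl, div_lt_one (by positivity)]
    linarith [n.cast_nonneg (α := ℝ)]
  have hpl_mem : pl ∈ Icc (1 / ((n : ℝ) + 2)) 1 := ⟨hpl.ge, hpl_lt_one.le⟩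
  have hph_mem : ph ∈ Icc (1 / ((n : ℝ) + 2)) 1 := ⟨hpl ▸ hlh.le, hph.le⟩
  exact mul_lt_mul_of_pos_left
    (strictAntiOn_mul_one_sub_pow_succ n hpl_mem hph_mem hlh) (by positivity)
end

section
/- (Lemma 1) Let N ≥ 2, 1/N = p_l < p_h < 1, and let integers t, T satisfy 1 ≤ t < T. If f* : {0,1,…,t} → [0,1] is an optimal solution of the linear program minimizing Σ_{k=0}^t λ(k;t) f(k) subject to ((T−t)/T) · Σ_{k=0}^t [τ_d μ(k;t) − τ_c λ(k;t)] f(k) ≥ τ_d − τ_c and 0 ≤ f(k) ≤ 1 for all k, then the incentive constraint holds with equality at f*: ((T−t)/T) · Σ_{k=0}^t [τ_d μ(k;t) − τ_c λ(k;t)] f*(k) = τ_d − τ_c. -/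
open Finset

/-- `lam N t pl k` is the probability of `k` idle signals out of `t` when all `N`
users transmit with probability `pl`. -/
noncomputable def lam (N t : ℕ) (pl : ℝ) (k : ℕ) : ℝ :=
  (t.choose k : ℝ) * ((1 - pl) ^ N) ^ k * (1 - (1 - pl) ^ N) ^ (t - k)

/-- `mu N t pl ph k` is the probability of `k` idle signals out of `t` when exactly
one user transmits with probability `ph` and the others with `pl`. -/
noncomputable def mu (N t : ℕ) (pl ph : ℝ) (k : ℕ) : ℝ :=
  (t.choose k : ℝ) * ((1 - pl) ^ (N - 1) * (1 - ph)) ^ k *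
    (1 - (1 - pl) ^ (N - 1) * (1 - ph)) ^ (t - k)

/-- The cooperation throughput `τ_c = pl (1 - pl)^{N-1}`. -/
noncomputable def tauC (N : ℕ) (pl : ℝ) : ℝ := pl * (1 - pl) ^ (N - 1)

/-- The defection throughput `τ_d = ph (1 - pl)^{N-1}`. -/
noncomputable def tauD (N : ℕ) (pl ph : ℝ) : ℝ := ph * (1 - pl) ^ (N - 1)

/-- `f : {0,…,t} → [0,1]` is an intervention rule. -/
def IsRule (t : ℕ) (f : ℕ → ℝ) : Prop := ∀ k ≤ t, 0 ≤ f k ∧ f k ≤ 1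

/-- The left-hand side of the incentive constraint:
`((T−t)/T) · Σ_{k=0}^t [τ_d μ(k;t) − τ_c λ(k;t)] f(k)`. -/
noncomputable def incLHS (N t T : ℕ) (pl ph : ℝ) (f : ℕ → ℝ) : ℝ :=
  (((T : ℝ) - t) / T) * ∑ k ∈ Finset.range (t + 1),
    (tauD N pl ph * mu N t pl ph k - tauC N pl * lam N t pl k) * f k

/-- A feasible solution of the linear program: an intervention rule satisfying the
incentive constraint. -/
def Feasible (N t T : ℕ) (pl ph : ℝ) (f : ℕ → ℝ) : Prop :=
  IsRule t f ∧ incLHS N t T pl ph f ≥ tauD N pl ph - tauC N pl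

/-- The objective of the linear program: the expected transmission probability of the
intervention device under cooperation, `Σ_{k=0}^t λ(k;t) f(k)`. -/
noncomputable def objective (N t : ℕ) (pl : ℝ) (f : ℕ → ℝ) : ℝ :=
  ∑ k ∈ Finset.range (t + 1), lam N t pl k * f k

/-!
If the incentive constraint had slack at an optimum `f*`, i.e. its left-hand side `S` exceeded
`R = τ_d − τ_c > 0`, then `(R / S) • f*` would still be a feasible rule. Since every `λ(k;t)` is
positive and `f* ≠ 0` (as `S > 0`), the objective is positive at `f*`, so scaling it by
`R / S < 1` strictly decreases it, contradicting optimality.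
-/

section ScalingArgument

variable {ι : Type*} {s : Finset ι} {w a f : ι → ℝ} {b : ℝ}

lemma sum_mul_pos_of_sum_mul_ne_zero (hw : ∀ i ∈ s, 0 < w i) (hf : ∀ i ∈ s, 0 ≤ f i)
    (hfa : ∑ i ∈ s, a i * f i ≠ 0) : 0 < ∑ i ∈ s, w i * f i := by
  refine (sum_nonneg fun i hi => mul_nonneg (hw i hi).le (hf i hi)).lt_of_ne fun h => ?_
  have hzero : ∀ i ∈ s, f i = 0 := fun i hi => by
    simpa [(hw i hi).ne'] using
      (sum_eq_zero_iff_of_nonneg fun i hi => mul_nonneg (hw i hi).le (hf i hi)).1 h.symm i hi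
  exact hfa (sum_eq_zero fun i hi => by simp [hzero i hi])

lemma sum_mul_eq_of_optimal (hw : ∀ i ∈ s, 0 < w i) (hb : 0 < b)
    (hf : ∀ i ∈ s, 0 ≤ f i ∧ f i ≤ 1) (hfa : b ≤ ∑ i ∈ s, a i * f i)
    (hopt : ∀ g : ι → ℝ, (∀ i ∈ s, 0 ≤ g i ∧ g i ≤ 1) → b ≤ ∑ i ∈ s, a i * g i →
      ∑ i ∈ s, w i * f i ≤ ∑ i ∈ s, w i * g i) :
    ∑ i ∈ s, a i * f i = b := by
  set S := ∑ i ∈ s, a i * f i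
  refine (hfa.lt_or_eq.resolve_left fun hslack => ?_).symm
  have hS : 0 < S := hb.trans hslack
  set c := b / S
  have hc0 : 0 < c := div_pos hb hS
  have hc1 : c < 1 := (div_lt_one hS).2 hslack
  have hscaled_rule : ∀ i ∈ s, 0 ≤ c * f i ∧ c * f i ≤ 1 := fun i hi =>
    ⟨mul_nonneg hc0.le (hf i hi).1, mul_le_one₀ hc1.le (hf i hi).1 (hf i hi).2⟩
  have hscaled_constraint : ∑ i ∈ s, a i * (c * f i) = b := by
    simp_rw [mul_left_comm _ c, ← mul_sum]
    exact div_mul_cancel₀ _ hS.ne'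
  have hle := hopt _ hscaled_rule hscaled_constraint.ge
  simp_rw [mul_left_comm _ c, ← mul_sum] at hle
  have hobj := sum_mul_pos_of_sum_mul_ne_zero hw (fun i hi => (hf i hi).1) hS.ne'
  exact hle.not_gt (mul_lt_of_lt_one_left hobj hc1)

end ScalingArgument

lemma lam_pos {N t k : ℕ} {pl : ℝ} (hN : N ≠ 0) (hpl0 : 0 < pl) (hpl1 : pl < 1)
    (hk : k ≤ t) : 0 < lam N t pl k := by
  have hidle : (1 - pl) ^ N < 1 := pow_lt_one₀ (by linarith) (by linarith) hN
  have hchoose : 0 < (t.choose k : ℝ) := by exact_mod_cast Nat.choose_pos hk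
  exact mul_pos (mul_pos hchoose (pow_pos (pow_pos (by linarith) N) k))
    (pow_pos (sub_pos.2 hidle) _)

lemma tauC_lt_tauD {N : ℕ} {pl ph : ℝ} (hpl1 : pl < 1) (hlh : pl < ph) :
    tauC N pl < tauD N pl ph :=
  mul_lt_mul_of_pos_right hlh (pow_pos (by linarith) _)

lemma incLHS_eq_sum (N t T : ℕ) (pl ph : ℝ) (f : ℕ → ℝ) :
    incLHS N t T pl ph f = ∑ k ∈ range (t + 1),
      ((T - t : ℝ) / T * (tauD N pl ph * mu N t pl ph k - tauC N pl * lam N t pl k)) * f k := by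
  simp_rw [incLHS, mul_sum, mul_assoc]

lemma isRule_iff_forall_mem_range {t : ℕ} {f : ℕ → ℝ} :
    IsRule t f ↔ ∀ k ∈ range (t + 1), 0 ≤ f k ∧ f k ≤ 1 := by
  simp only [IsRule, mem_range, Nat.lt_succ_iff]

theorem incentive_constraint_binding_general (N t T : ℕ) (pl ph : ℝ) (hN : 2 ≤ N)
    (hpl : pl = 1 / N) (hlh : pl < ph)
    (fstar : ℕ → ℝ) (hfeas : Feasible N t T pl ph fstar)
    (hopt : ∀ f : ℕ → ℝ, Feasible N t T pl ph f →
      objective N t pl fstar ≤ objective N t pl f) :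
    incLHS N t T pl ph fstar = tauD N pl ph - tauC N pl := by
  have hN1 : (1 : ℝ) < N := by exact_mod_cast hN
  have hpl0 : 0 < pl := by rw [hpl]; positivity
  have hpl1 : pl < 1 := by rw [hpl, div_lt_one (by linarith)]; exact hN1
  have hlam : ∀ k ∈ range (t + 1), 0 < lam N t pl k := fun k hk =>
    lam_pos (by omega) hpl0 hpl1 (Nat.lt_succ_iff.1 (mem_range.1 hk))
  obtain ⟨hrule, hconstraint⟩ := hfeas
  rw [incLHS_eq_sum] at hconstraint ⊢
  refine sum_mul_eq_of_optimal hlam (sub_pos.2 (tauC_lt_tauD hpl1 hlh))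
    (isRule_iff_forall_mem_range.1 hrule) hconstraint fun g hg hga => hopt g ?_
  exact ⟨isRule_iff_forall_mem_range.2 hg, (incLHS_eq_sum ..).symm ▸ hga⟩

/-- (Lemma 1) At any optimal solution of the linear program, the incentive constraint
holds with equality. -/
theorem incentive_constraint_binding (N t T : ℕ) (pl ph : ℝ) (hN : 2 ≤ N)
    (hpl : pl = 1 / N) (hlh : pl < ph) (hph : ph < 1) (ht : 1 ≤ t) (htT : t < T)
    (fstar : ℕ → ℝ) (hfeas : Feasible N t T pl ph fstar)
    (hopt : ∀ f : ℕ → ℝ, Feasible N t T pl ph f →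
      objective N t pl fstar ≤ objective N t pl f) :
    incLHS N t T pl ph fstar = tauD N pl ph - tauC N pl :=
  incentive_constraint_binding_general N t T pl ph hN hpl hlh fstar hfeas hopt
end

section
/- Let N ≥ 2, 1/N = p_l < p_h < 1, and t ≥ 1. For each 0 ≤ k ≤ t, τ_d·μ(k;t) − τ_c·λ(k;t) > 0 if and only if L(k;t) > p_l/p_h. Moreover, the set {k ∈ {0,…,t} : τ_d·μ(k;t) − τ_c·λ(k;t) > 0} is nonempty (it contains k = 0), so that k₀ = max{k : τ_d·μ(k;t) − τ_c·λ(k;t) > 0} is well defined, and τ_d·μ(k;t) − τ_c·λ(k;t) > 0 holds if and only if k ≤ k₀. -/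
open Finset

private lemma aux_mono (pl ph a b : ℝ) (t k m : ℕ)
    (hpl0 : 0 < pl) (ha0 : 0 < a) (hb0 : 0 < b) (hba : b < a)
    (h1a : 0 < 1 - a) (h1b : 0 < 1 - b) (hkm : k ≤ m) (hmt : m ≤ t)
    (hpos : pl * (a ^ m * (1 - a) ^ (t - m)) < ph * (b ^ m * (1 - b) ^ (t - m))) :
    pl * (a ^ k * (1 - a) ^ (t - k)) < ph * (b ^ k * (1 - b) ^ (t - k)) := by
  obtain ⟨j, hj⟩ : ∃ j, m = k + j := ⟨m - k, by omega⟩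
  have htkj : t - k = (t - m) + j := by omega
  have hknown : pl * ((a ^ k * (1 - a) ^ (t - m)) * a ^ j)
      < ph * ((b ^ k * (1 - b) ^ (t - m)) * b ^ j) := by
    calc pl * ((a ^ k * (1 - a) ^ (t - m)) * a ^ j)
        = pl * (a ^ m * (1 - a) ^ (t - m)) := by rw [hj, pow_add]; ring
      _ < ph * (b ^ m * (1 - b) ^ (t - m)) := hpos
      _ = ph * ((b ^ k * (1 - b) ^ (t - m)) * b ^ j) := by rw [hj, pow_add]; ring
  have hgoal1 : a ^ k * (1 - a) ^ (t - k) = (a ^ k * (1 - a) ^ (t - m)) * (1 - a) ^ j := by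
    rw [htkj, pow_add]; ring
  have hgoal2 : b ^ k * (1 - b) ^ (t - k) = (b ^ k * (1 - b) ^ (t - m)) * (1 - b) ^ j := by
    rw [htkj, pow_add]; ring
  rw [hgoal1, hgoal2]
  have hABpos : 0 < a ^ j * b ^ j := mul_pos (pow_pos ha0 j) (pow_pos hb0 j)
  have key : ((1 - a) * b) ^ j ≤ (a * (1 - b)) ^ j := by
    apply pow_le_pow_left₀ (by positivity)
    nlinarith
  have hApos : 0 ≤ pl * ((a ^ k * (1 - a) ^ (t - m)) * a ^ j) := by positivity
  have hlt : pl * ((a ^ k * (1 - a) ^ (t - m)) * (1 - a) ^ j) * (a ^ j * b ^ j)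
      < ph * ((b ^ k * (1 - b) ^ (t - m)) * (1 - b) ^ j) * (a ^ j * b ^ j) := by
    have e1 : pl * ((a ^ k * (1 - a) ^ (t - m)) * (1 - a) ^ j) * (a ^ j * b ^ j)
        = (pl * ((a ^ k * (1 - a) ^ (t - m)) * a ^ j)) * (((1 - a) * b) ^ j) := by
      rw [mul_pow]; ring
    have e2 : ph * ((b ^ k * (1 - b) ^ (t - m)) * (1 - b) ^ j) * (a ^ j * b ^ j)
        = (ph * ((b ^ k * (1 - b) ^ (t - m)) * b ^ j)) * ((a * (1 - b)) ^ j) := by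
      rw [mul_pow]; ring
    rw [e1, e2]
    calc (pl * ((a ^ k * (1 - a) ^ (t - m)) * a ^ j)) * (((1 - a) * b) ^ j)
        ≤ (pl * ((a ^ k * (1 - a) ^ (t - m)) * a ^ j)) * ((a * (1 - b)) ^ j) :=
          mul_le_mul_of_nonneg_left key hApos
      _ < (ph * ((b ^ k * (1 - b) ^ (t - m)) * b ^ j)) * ((a * (1 - b)) ^ j) := by
          apply mul_lt_mul_of_pos_right hknown
          positivity
  exact lt_of_mul_lt_mul_right hlt hABpos.le

/-- For each `0 ≤ k ≤ t`, `τ_d μ(k;t) − τ_c λ(k;t) > 0` iff `L(k;t) > pl/ph`; the set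
of such `k` contains `k = 0`, so its maximum `k₀` is well defined, and positivity
holds exactly for `k ≤ k₀`. -/
theorem positivity_threshold_k0 (N t : ℕ) (pl ph : ℝ) (hN : 2 ≤ N)
    (hpl : pl = 1 / N) (hlh : pl < ph) (hph : ph < 1) (ht : 1 ≤ t) :
    (∀ k ≤ t, (0 < tauD N pl ph * mu N t pl ph k - tauC N pl * lam N t pl k ↔
        pl / ph < mu N t pl ph k / lam N t pl k)) ∧
    0 < tauD N pl ph * mu N t pl ph 0 - tauC N pl * lam N t pl 0 ∧
    ∃ k0 ≤ t, ∀ k ≤ t,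
      (0 < tauD N pl ph * mu N t pl ph k - tauC N pl * lam N t pl k ↔ k ≤ k0) := by
  classical
  have hN2 : (2:ℝ) ≤ (N:ℝ) := by exact_mod_cast hN
  have hNpos : (0:ℝ) < N := by linarith
  have hpl0 : 0 < pl := by rw [hpl]; positivity
  have hpl1 : pl < 1 := by rw [hpl, div_lt_one hNpos]; linarith
  have hph0 : 0 < ph := lt_trans hpl0 hlh
  obtain ⟨x, hx⟩ : ∃ x : ℝ, x = 1 - pl := ⟨_, rfl⟩
  have hx0 : 0 < x := by rw [hx]; linarith
  have hx1 : x < 1 := by rw [hx]; linarith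
  obtain ⟨c, hc⟩ : ∃ c : ℝ, c = x ^ (N - 1) := ⟨_, rfl⟩
  have hc0 : 0 < c := hc ▸ pow_pos hx0 _
  obtain ⟨a, ha⟩ : ∃ a : ℝ, a = x ^ N := ⟨_, rfl⟩
  have ha0 : 0 < a := ha ▸ pow_pos hx0 _
  have hab : a = c * x := by
    rw [ha, hc, ← pow_succ]
    congr 1
    omega
  obtain ⟨b, hb⟩ : ∃ b : ℝ, b = c * (1 - ph) := ⟨_, rfl⟩
  have hb0 : 0 < b := by rw [hb]; exact mul_pos hc0 (by linarith)
  have hba : b < a := by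
    rw [hab, hb]
    exact mul_lt_mul_of_pos_left (by rw [hx]; linarith) hc0
  have ha1 : a < 1 := by
    rw [ha]
    exact pow_lt_one₀ hx0.le hx1 (by omega)
  have h1a : 0 < 1 - a := by linarith
  have h1b : 0 < 1 - b := by linarith
  have hdiff : ∀ k, tauD N pl ph * mu N t pl ph k - tauC N pl * lam N t pl k
      = c * (t.choose k : ℝ) *
        (ph * (b ^ k * (1 - b) ^ (t - k)) - pl * (a ^ k * (1 - a) ^ (t - k))) := by
    intro k
    simp only [tauD, tauC, mu, lam, ← hx, ← hc, ← ha, ← hb]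
    ring
  have hCpos : ∀ k ≤ t, (0:ℝ) < (t.choose k : ℝ) := by
    intro k hk
    exact_mod_cast Nat.choose_pos hk
  have hP : ∀ k ≤ t,
      (0 < tauD N pl ph * mu N t pl ph k - tauC N pl * lam N t pl k ↔
        pl * (a ^ k * (1 - a) ^ (t - k)) < ph * (b ^ k * (1 - b) ^ (t - k))) := by
    intro k hk
    rw [hdiff k, mul_pos_iff_of_pos_left (mul_pos hc0 (hCpos k hk)), sub_pos]
  have hlam_pos : ∀ k ≤ t, 0 < lam N t pl k := by
    intro k hk
    rw [lam, ← hx, ← ha]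
    have := hCpos k hk
    positivity
  have hmu_form : ∀ k, mu N t pl ph k = (t.choose k : ℝ) * b ^ k * (1 - b) ^ (t - k) := by
    intro k
    simp only [mu, ← hx, ← hc, ← hb]
  have hlam_form : ∀ k, lam N t pl k = (t.choose k : ℝ) * a ^ k * (1 - a) ^ (t - k) := by
    intro k
    simp only [lam, ← hx, ← ha]
  have part1 : ∀ k ≤ t, (0 < tauD N pl ph * mu N t pl ph k - tauC N pl * lam N t pl k ↔
      pl / ph < mu N t pl ph k / lam N t pl k) := by
    intro k hk
    rw [hP k hk, div_lt_div_iff₀ hph0 (hlam_pos k hk), hmu_form, hlam_form]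
    constructor
    · intro h; nlinarith [hCpos k hk]
    · intro h; nlinarith [hCpos k hk]
  have part2 : 0 < tauD N pl ph * mu N t pl ph 0 - tauC N pl * lam N t pl 0 := by
    rw [hP 0 (Nat.zero_le t)]
    simp only [pow_zero, one_mul, Nat.sub_zero]
    have hle : (1 - a) ^ t ≤ (1 - b) ^ t := pow_le_pow_left₀ h1a.le (by linarith) t
    nlinarith [pow_pos h1b t, pow_pos h1a t]
  refine ⟨part1, part2, ?_⟩
  set S : Finset ℕ := (Finset.range (t + 1)).filter
    (fun k => 0 < tauD N pl ph * mu N t pl ph k - tauC N pl * lam N t pl k) with hS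
  have h0S : 0 ∈ S := by
    rw [hS, Finset.mem_filter, Finset.mem_range]
    exact ⟨by omega, part2⟩
  have hSne : S.Nonempty := ⟨0, h0S⟩
  have hk0S : S.max' hSne ∈ S := S.max'_mem hSne
  have hk0t : S.max' hSne ≤ t := by
    have := (Finset.mem_filter.mp hk0S).1
    rw [Finset.mem_range] at this; omega
  have hk0pos := (Finset.mem_filter.mp hk0S).2
  refine ⟨S.max' hSne, hk0t, ?_⟩
  intro k hk
  constructor
  · intro h
    apply Finset.le_max'
    rw [hS, Finset.mem_filter, Finset.mem_range]
    exact ⟨by omega, h⟩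
  · intro h
    rw [hP k hk]
    exact aux_mono pl ph a b t k (S.max' hSne) hpl0 ha0 hb0 hba h1a h1b h hk0t
      ((hP _ hk0t).mp hk0pos)
end

section
/- (Proposition 1, feasibility, necessity) Let N ≥ 2, 1/N = p_l < p_h < 1, integers 1 ≤ t < T, and let k₀ = max{k ∈ {0,…,t} : τ_d·μ(k;t) − τ_c·λ(k;t) > 0}. If there exists a feasible intervention rule f : {0,…,t} → [0,1], i.e., one satisfying ((T−t)/T)·Σ_{k=0}^t [τ_d μ(k;t) − τ_c λ(k;t)] f(k) ≥ τ_d − τ_c, then ((T−t)/T)·Σ_{k ≤ k₀} [τ_d·μ(k;t) − τ_c·λ(k;t)] ≥ τ_d − τ_c. -/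
open Finset

/-!
A rule can only gain on the coefficients `c k = τ_d μ(k;t) − τ_c λ(k;t)` of the incentive
constraint that are positive, so `f = 1` on exactly those indices maximises its left-hand side.
Since `λ(·;t)` and `μ(·;t)` are the Bernstein weights at the idle probabilities
`(1 − p_l)^N` and `(1 − p_l)^{N−1}(1 − p_h)`, the first being the larger one, the ratio
`λ(k;t)/μ(k;t)` increases with `k`: the positive coefficients are exactly those with `k ≤ k₀`.
-/

lemma weighted_monomial_lt_shift {a b α β : ℝ} (ha : 0 ≤ a) (hab : a ≤ b) (hb : b ≤ 1)
    (ha1 : a < 1) (hβ : 0 ≤ β) (k m d : ℕ)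
    (h : β * (b ^ (k + d) * (1 - b) ^ m) < α * (a ^ (k + d) * (1 - a) ^ m)) :
    β * (b ^ k * (1 - b) ^ (m + d)) < α * (a ^ k * (1 - a) ^ (m + d)) := by
  have h' : β * (b ^ k * (1 - b) ^ m) * b ^ d < α * (a ^ k * (1 - a) ^ m) * a ^ d := by
    convert h using 1 <;> ring
  set X := β * (b ^ k * (1 - b) ^ m)
  set Y := α * (a ^ k * (1 - a) ^ m)
  have hX : 0 ≤ X := by
    have : 0 ≤ b := ha.trans hab
    have : 0 ≤ 1 - b := by linarith
    positivity
  have hXY : X < Y := by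
    by_contra! hYX
    have : Y * a ^ d ≤ X * b ^ d :=
      (mul_le_mul_of_nonneg_right hYX (by positivity)).trans
        (mul_le_mul_of_nonneg_left (pow_le_pow_left₀ ha hab d) hX)
    exact this.not_gt h'
  calc β * (b ^ k * (1 - b) ^ (m + d)) = X * (1 - b) ^ d := by ring
    _ ≤ X * (1 - a) ^ d :=
        mul_le_mul_of_nonneg_left (pow_le_pow_left₀ (by linarith) (by linarith) d) hX
    _ < Y * (1 - a) ^ d := mul_lt_mul_of_pos_right hXY (pow_pos (by linarith) d)
    _ = α * (a ^ k * (1 - a) ^ (m + d)) := by ring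

lemma bernsteinPolynomial_eval (t k : ℕ) (x : ℝ) :
    (bernsteinPolynomial ℝ t k).eval x = t.choose k * (x ^ k * (1 - x) ^ (t - k)) := by
  simp [bernsteinPolynomial, mul_assoc]

lemma bernsteinPolynomial_weighted_lt_of_le {a b α β : ℝ} (ha : 0 ≤ a) (hab : a ≤ b)
    (hb : b ≤ 1) (ha1 : a < 1) (hβ : 0 ≤ β) {t j k : ℕ} (hkj : k ≤ j) (hjt : j ≤ t)
    (h : β * (bernsteinPolynomial ℝ t j).eval b < α * (bernsteinPolynomial ℝ t j).eval a) :
    β * (bernsteinPolynomial ℝ t k).eval b < α * (bernsteinPolynomial ℝ t k).eval a := by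
  obtain ⟨d, rfl⟩ := Nat.exists_eq_add_of_le hkj
  have hchoose : ∀ i ≤ t, (0 : ℝ) < t.choose i := fun i hi => mod_cast Nat.choose_pos hi
  rw [bernsteinPolynomial_eval, bernsteinPolynomial_eval, mul_left_comm β, mul_left_comm α] at h ⊢
  rw [mul_lt_mul_iff_right₀ (hchoose _ hjt)] at h
  rw [mul_lt_mul_iff_right₀ (hchoose _ (by omega)), show t - k = t - (k + d) + d by omega]
  exact weighted_monomial_lt_shift ha hab hb ha1 hβ k _ d h

lemma sum_mul_le_sum_range_of_sign_change {c f : ℕ → ℝ} {t k₀ : ℕ} (hk₀ : k₀ ≤ t)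
    (hf : IsRule t f) (hpos : ∀ k ≤ k₀, 0 ≤ c k) (hneg : ∀ k ≤ t, k₀ < k → c k ≤ 0) :
    ∑ k ∈ range (t + 1), c k * f k ≤ ∑ k ∈ range (k₀ + 1), c k := by
  rw [← sum_range_add_sum_Ico _ (by omega : k₀ + 1 ≤ t + 1)]
  have hhead : ∑ k ∈ range (k₀ + 1), c k * f k ≤ ∑ k ∈ range (k₀ + 1), c k :=
    sum_le_sum fun k hk => by
      have hk : k ≤ k₀ := Nat.lt_succ_iff.1 (mem_range.1 hk)
      exact mul_le_of_le_one_right (hpos k hk) (hf k (hk.trans hk₀)).2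
  have htail : ∑ k ∈ Ico (k₀ + 1) (t + 1), c k * f k ≤ 0 :=
    sum_nonpos fun k hk => by
      obtain ⟨hk₀k, hkt⟩ := mem_Ico.1 hk
      exact mul_nonpos_of_nonpos_of_nonneg (hneg k (by omega) hk₀k) (hf k (by omega)).1
  linarith

lemma lam_eq_bernsteinPolynomial_eval (N t : ℕ) (pl : ℝ) (k : ℕ) :
    lam N t pl k = (bernsteinPolynomial ℝ t k).eval ((1 - pl) ^ N) := by
  rw [bernsteinPolynomial_eval, lam]; ring

lemma mu_eq_bernsteinPolynomial_eval (N t : ℕ) (pl ph : ℝ) (k : ℕ) :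
    mu N t pl ph k = (bernsteinPolynomial ℝ t k).eval ((1 - pl) ^ (N - 1) * (1 - ph)) := by
  rw [bernsteinPolynomial_eval, mu]; ring

lemma incentive_coeff_pos_of_le {N t : ℕ} {pl ph : ℝ} (hN : 1 ≤ N) (hpl : 0 ≤ pl)
    (hlh : pl < ph) (hph : ph < 1) {j k : ℕ} (hkj : k ≤ j) (hjt : j ≤ t)
    (hj : 0 < tauD N pl ph * mu N t pl ph j - tauC N pl * lam N t pl j) :
    0 < tauD N pl ph * mu N t pl ph k - tauC N pl * lam N t pl k := by
  have hq : 0 ≤ (1 - pl) ^ (N - 1) := pow_nonneg (by linarith) _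
  have hq1 : (1 - pl) ^ (N - 1) ≤ 1 := pow_le_one₀ (by linarith) (by linarith)
  have hidle : (1 - pl) ^ N = (1 - pl) ^ (N - 1) * (1 - pl) := by
    rw [← pow_succ, Nat.sub_add_cancel hN]
  simp only [sub_pos, mu_eq_bernsteinPolynomial_eval, lam_eq_bernsteinPolynomial_eval] at hj ⊢
  refine bernsteinPolynomial_weighted_lt_of_le (by nlinarith) ?_ ?_ (by nlinarith)
    (by unfold tauC; positivity) hkj hjt hj
  · rw [hidle]; exact mul_le_mul_of_nonneg_left (by linarith) hq
  · rw [hidle]; nlinarith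

theorem feasibility_necessary_general (N t T : ℕ) (pl ph : ℝ) (hN : 2 ≤ N)
    (hpl : pl = 1 / N) (hlh : pl < ph) (hph : ph < 1) (htT : t < T)
    (k0 : ℕ) (hk0t : k0 ≤ t)
    (hk0pos : 0 < tauD N pl ph * mu N t pl ph k0 - tauC N pl * lam N t pl k0)
    (hk0max : ∀ k ≤ t,
      0 < tauD N pl ph * mu N t pl ph k - tauC N pl * lam N t pl k → k ≤ k0)
    (hfeas : ∃ f : ℕ → ℝ, Feasible N t T pl ph f) :
    (((T : ℝ) - t) / T) * ∑ k ∈ Finset.range (k0 + 1),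
        (tauD N pl ph * mu N t pl ph k - tauC N pl * lam N t pl k)
      ≥ tauD N pl ph - tauC N pl := by
  obtain ⟨f, hf, hinc⟩ := hfeas
  have hpl0 : 0 ≤ pl := hpl ▸ by positivity
  have hscale : 0 ≤ ((T : ℝ) - t) / T :=
    div_nonneg (sub_nonneg.2 (mod_cast htT.le)) (Nat.cast_nonneg T)
  have hsum := sum_mul_le_sum_range_of_sign_change hk0t hf
    (fun k hk => (incentive_coeff_pos_of_le (by omega) hpl0 hlh hph hk hk0t hk0pos).le)
    (fun k hkt hk => not_lt.1 fun h => (hk0max k hkt h).not_gt hk)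
  exact hinc.trans (mul_le_mul_of_nonneg_left hsum hscale)

/-- (Proposition 1, feasibility, necessity) If the linear program has a feasible
solution, then `((T−t)/T)·Σ_{k ≤ k₀} [τ_d μ(k;t) − τ_c λ(k;t)] ≥ τ_d − τ_c`, where
`k₀` is the largest `k ∈ {0,…,t}` with `τ_d μ(k;t) − τ_c λ(k;t) > 0`. -/
theorem feasibility_necessary (N t T : ℕ) (pl ph : ℝ) (hN : 2 ≤ N)
    (hpl : pl = 1 / N) (hlh : pl < ph) (hph : ph < 1) (ht : 1 ≤ t) (htT : t < T)
    (k0 : ℕ) (hk0t : k0 ≤ t)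
    (hk0pos : 0 < tauD N pl ph * mu N t pl ph k0 - tauC N pl * lam N t pl k0)
    (hk0max : ∀ k ≤ t,
      0 < tauD N pl ph * mu N t pl ph k - tauC N pl * lam N t pl k → k ≤ k0)
    (hfeas : ∃ f : ℕ → ℝ, Feasible N t T pl ph f) :
    (((T : ℝ) - t) / T) * ∑ k ∈ Finset.range (k0 + 1),
        (tauD N pl ph * mu N t pl ph k - tauC N pl * lam N t pl k)
      ≥ tauD N pl ph - tauC N pl :=
  feasibility_necessary_general N t T pl ph hN hpl hlh hph htT k0 hk0t hk0pos hk0max hfeas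
end
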